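/- arXiv:1307.7216 — 2 statements merged into one kernel-verified Lean document; each statement's English description precedes it below -/
import Mathlib

section
/- With M complete symmetric monoidal closed, if Γ : α → α' is a modification between strict 2-natural transformations α, α' : p₁ → p₂ (underlying lax transformations σ₁, σ₂ : F → G), then there is a canonical morphism ∫_{σ₁}^{σ₂} GΓ : ∫_{σ₁}^{σ₂} Gα → ∫_{σ₁}^{σ₂} Gα' in M, induced on equalizers by the maps G(Γ_c) : G(α_c) → G(α'_c); i.e. the family (pr_c ≫ G(Γ_c))_c equalizes the two parallel maps defining ∫_{σ₁}^{σ₂} Gα'. -/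
open CategoryTheory CategoryTheory.Limits CategoryTheory.MonoidalCategory

universe w v u w₂ v₂ u₂ w₃ v₃ u₃ v₀ u₀

/-- A lax functor from a strict 2-category `C` to a monoidal category `M`,
the latter viewed as a bicategory with a single object. -/
structure MonLaxFunctor (C : Type u) [Bicategory.{w, v} C] [Bicategory.Strict C]
    (M : Type u₀) [Category.{v₀} M] [MonoidalCategory M] where
  map : ∀ {a b : C}, (a ⟶ b) → M
  map₂ : ∀ {a b : C} {f g : a ⟶ b}, (f ⟶ g) → (map f ⟶ map g)
  map₂_id : ∀ {a b : C} (f : a ⟶ b), map₂ (𝟙 f) = 𝟙 (map f)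
  map₂_comp : ∀ {a b : C} {f g h : a ⟶ b} (η : f ⟶ g) (θ : g ⟶ h),
    map₂ (η ≫ θ) = map₂ η ≫ map₂ θ
  /-- laxity maps -/
  μ : ∀ {a b c : C} (f : a ⟶ b) (g : b ⟶ c), map f ⊗ map g ⟶ map (f ≫ g)
  /-- unit laxity maps -/
  ε : ∀ a : C, 𝟙_ M ⟶ map (𝟙 a)
  μ_natural :
    ∀ {a b c : C} {f f' : a ⟶ b} {g g' : b ⟶ c} (η : f ⟶ f') (θ : g ⟶ g'),
      (map₂ η ⊗ₘ map₂ θ) ≫ μ f' g' = μ f g ≫ map₂ (Bicategory.whiskerRight η g ≫ Bicategory.whiskerLeft f' θ)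
  assoc :
    ∀ {a b c d : C} (f : a ⟶ b) (g : b ⟶ c) (h : c ⟶ d),
      (μ f g ⊗ₘ 𝟙 (map h)) ≫ μ (f ≫ g) h ≫ eqToHom (by rw [Category.assoc]) =
        (α_ (map f) (map g) (map h)).hom ≫ (𝟙 (map f) ⊗ₘ μ g h) ≫ μ f (g ≫ h)
  left_unit :
    ∀ {a b : C} (f : a ⟶ b),
      (ε a ⊗ₘ 𝟙 (map f)) ≫ μ (𝟙 a) f = (λ_ (map f)).hom ≫ eqToHom (by rw [Category.id_comp])
  right_unit :
    ∀ {a b : C} (f : a ⟶ b),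
      (𝟙 (map f) ⊗ₘ ε b) ≫ μ f (𝟙 b) = (ρ_ (map f)).hom ≫ eqToHom (by rw [Category.comp_id])

open CategoryTheory.Bicategory

namespace MonLaxFunctor

variable {C : Type u} [Bicategory.{w, v} C] [Bicategory.Strict C]
variable {M : Type u₀} [Category.{v₀} M] [MonoidalCategory M]

/-- Composition of "elements" of a lax functor, via the laxity maps. -/
def elComp (F : MonLaxFunctor C M) {a b c : C} {k : a ⟶ b} {k' : b ⟶ c}
    (x : 𝟙_ M ⟶ F.map k) (y : 𝟙_ M ⟶ F.map k') : 𝟙_ M ⟶ F.map (k ≫ k') :=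
  (λ_ (𝟙_ M)).inv ≫ (x ⊗ₘ y) ≫ F.μ k k'

/-- Objects of the category of elements `El(F)(A,B)`. -/
structure El (F : MonLaxFunctor C M) (A B : C) where
  k : A ⟶ B
  x : 𝟙_ M ⟶ F.map k

instance elCategory (F : MonLaxFunctor C M) (A B : C) : Category (F.El A B) where
  Hom e e' := { α : e.k ⟶ e'.k // e.x ≫ F.map₂ α = e'.x }
  id e := ⟨𝟙 e.k, by rw [F.map₂_id, Category.comp_id]⟩
  comp u v := ⟨u.1 ≫ v.1, by rw [F.map₂_comp, ← Category.assoc, u.2, v.2]⟩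
  id_comp u := Subtype.ext (Category.id_comp u.1)
  comp_id u := Subtype.ext (Category.comp_id u.1)
  assoc u v w := Subtype.ext (Category.assoc u.1 v.1 w.1)

/-- The `Set`-valued functor `k ↦ Hom_M(I, F k)` on the hom-category `C(A,B)`. -/
def elementsFunctor (F : MonLaxFunctor C M) (A B : C) : (A ⟶ B) ⥤ Type v₀ where
  obj k := 𝟙_ M ⟶ F.map k
  map α := TypeCat.ofHom fun x => x ≫ F.map₂ α
  map_id k := by ext x; simp [F.map₂_id]
  map_comp α β := by
    ext x
    show x ≫ F.map₂ (α ≫ β) = (x ≫ F.map₂ α) ≫ F.map₂ β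
    rw [F.map₂_comp, Category.assoc]

/-- The projection `Φ_{A,B} : El(F)(A,B) ⥤ C(A,B)`. -/
def elProj (F : MonLaxFunctor C M) (A B : C) : F.El A B ⥤ (A ⟶ B) where
  obj e := e.k
  map u := u.1
  map_id _ := rfl
  map_comp _ _ := rfl

end MonLaxFunctor

/-- A strict 2-functor between strict 2-categories. -/
structure StrictTwoFunctor (C : Type u) [Bicategory.{w, v} C] [Bicategory.Strict C]
    (D : Type u₂) [Bicategory.{w₂, v₂} D] [Bicategory.Strict D] where
  obj : C → D
  map : ∀ {a b : C}, (a ⟶ b) → (obj a ⟶ obj b)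
  map₂ : ∀ {a b : C} {f g : a ⟶ b}, (f ⟶ g) → (map f ⟶ map g)
  map_id : ∀ a : C, map (𝟙 a) = 𝟙 (obj a)
  map_comp : ∀ {a b c : C} (f : a ⟶ b) (g : b ⟶ c), map (f ≫ g) = map f ≫ map g
  map₂_id : ∀ {a b : C} (f : a ⟶ b), map₂ (𝟙 f) = 𝟙 (map f)
  map₂_comp : ∀ {a b : C} {f g h : a ⟶ b} (η : f ⟶ g) (θ : g ⟶ h),
    map₂ (η ≫ θ) = map₂ η ≫ map₂ θ
  map₂_whisker_left : ∀ {a b c : C} (f : a ⟶ b) {g h : b ⟶ c} (η : g ⟶ h),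
    map₂ (f ◁ η) = eqToHom (map_comp f g) ≫ map f ◁ map₂ η ≫ eqToHom (map_comp f h).symm
  map₂_whisker_right : ∀ {a b c : C} {f g : a ⟶ b} (η : f ⟶ g) (h : b ⟶ c),
    map₂ (η ▷ h) = eqToHom (map_comp f h) ≫ map₂ η ▷ map h ≫ eqToHom (map_comp g h).symm

section Trans

variable {C : Type u} [Bicategory.{w, v} C] [Bicategory.Strict C]
variable {D : Type u₂} [Bicategory.{w₂, v₂} D] [Bicategory.Strict D]
variable {M : Type u₀} [Category.{v₀} M] [MonoidalCategory M]

/-- A lax transformation (icon) `σ : F → p* G` over a strict 2-functor `p`;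
a morphism of `M`-valued lax functors. -/
structure MonLaxTrans (F : MonLaxFunctor C M) (G : MonLaxFunctor D M)
    (p : StrictTwoFunctor C D) where
  app : ∀ {a b : C} (f : a ⟶ b), F.map f ⟶ G.map (p.map f)
  naturality : ∀ {a b : C} {f g : a ⟶ b} (η : f ⟶ g),
    app f ≫ G.map₂ (p.map₂ η) = F.map₂ η ≫ app g
  comp : ∀ {a b c : C} (f : a ⟶ b) (g : b ⟶ c),
    F.μ f g ≫ app (f ≫ g) =
      (app f ⊗ₘ app g) ≫ G.μ (p.map f) (p.map g) ≫ eqToHom (by rw [p.map_comp])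
  unit : ∀ a : C, F.ε a ≫ app (𝟙 a) = G.ε (p.obj a) ≫ eqToHom (by rw [p.map_id])

/-- A strict 2-natural transformation between strict 2-functors. -/
structure Strict2NatTrans (p₁ p₂ : StrictTwoFunctor C D) where
  app : ∀ c : C, p₁.obj c ⟶ p₂.obj c
  naturality : ∀ {c d : C} (f : c ⟶ d), p₁.map f ≫ app d = app c ≫ p₂.map f
  naturality₂ : ∀ {c d : C} {f g : c ⟶ d} (η : f ⟶ g),
    p₁.map₂ η ▷ app d ≫ eqToHom (naturality g) = eqToHom (naturality f) ≫ app c ◁ p₂.map₂ η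

/-- A modification between strict 2-natural transformations. -/
structure Modification2 {p₁ p₂ : StrictTwoFunctor C D} (α α' : Strict2NatTrans p₁ p₂) where
  app : ∀ c : C, α.app c ⟶ α'.app c
  w : ∀ {c d : C} (f : c ⟶ d),
    p₁.map f ◁ app d ≫ eqToHom (α'.naturality f) =
      eqToHom (α.naturality f) ≫ app c ▷ p₂.map f

/-- The hexagon axiom of a nerve-transformation `η : σ₁ → σ₂` over `α : p₁ → p₂`. -/
def IsNerveTrans {F : MonLaxFunctor C M} {G : MonLaxFunctor D M}
    {p₁ p₂ : StrictTwoFunctor C D} (σ₁ : MonLaxTrans F G p₁) (σ₂ : MonLaxTrans F G p₂)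
    (α : Strict2NatTrans p₁ p₂) (η : ∀ c : C, 𝟙_ M ⟶ G.map (α.app c)) : Prop :=
  ∀ {c d : C} (f : c ⟶ d),
    (ρ_ (F.map f)).inv ≫ (σ₁.app f ⊗ₘ η d) ≫ G.μ (p₁.map f) (α.app d) =
      (λ_ (F.map f)).inv ≫ (η c ⊗ₘ σ₂.app f) ≫ G.μ (α.app c) (p₂.map f) ≫
        eqToHom (by rw [α.naturality])

end Trans

section Classifier

variable {C : Type u} [Bicategory.{w, v} C] [Bicategory.Strict C]
variable {D : Type u₂} [Bicategory.{w₂, v₂} D] [Bicategory.Strict D]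
variable {M : Type u₀} [Category.{v₀} M] [MonoidalCategory M] [SymmetricCategory M]
  [MonoidalClosed M] [HasProducts.{u} M] [HasProducts.{max u v} M] [HasEqualizers M]

/-- The type of 1-morphisms of `C`. -/
abbrev OneCell (C : Type u) [Bicategory.{w, v} C] : Type max u v := Σ c d : C, c ⟶ d

variable (F : MonLaxFunctor C M) (G : MonLaxFunctor D M)
variable {p₁ p₂ p₃ p₄ : StrictTwoFunctor C D}

/-- First leg of the pair of parallel maps defining the classifying object. -/
noncomputable def classifyA (σ₁ : MonLaxTrans F G p₁) (σ₂ : MonLaxTrans F G p₂)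
    (α : Strict2NatTrans p₁ p₂) :
    (∏ᶜ fun c : C => G.map (α.app c)) ⟶
      ∏ᶜ fun t : OneCell C =>
        (ihom (F.map t.2.2)).obj (G.map (p₁.map t.2.2 ≫ α.app t.2.1)) :=
  Pi.lift fun t => MonoidalClosed.curry
    ((σ₁.app t.2.2 ⊗ₘ Pi.π _ t.2.1) ≫ G.μ (p₁.map t.2.2) (α.app t.2.1))

/-- Second leg of the pair of parallel maps defining the classifying object. -/
noncomputable def classifyB (σ₁ : MonLaxTrans F G p₁) (σ₂ : MonLaxTrans F G p₂)
    (α : Strict2NatTrans p₁ p₂) :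
    (∏ᶜ fun c : C => G.map (α.app c)) ⟶
      ∏ᶜ fun t : OneCell C =>
        (ihom (F.map t.2.2)).obj (G.map (p₁.map t.2.2 ≫ α.app t.2.1)) :=
  Pi.lift fun t => MonoidalClosed.curry
    ((β_ (F.map t.2.2) _).hom ≫ (Pi.π _ t.1 ⊗ₘ σ₂.app t.2.2) ≫
      G.μ (α.app t.1) (p₂.map t.2.2) ≫ eqToHom (by rw [α.naturality]))

/-- The classifying object `∫_{σ₁}^{σ₂} G α` for nerve-transformations over `α`. -/
noncomputable def nerveClassifier (σ₁ : MonLaxTrans F G p₁) (σ₂ : MonLaxTrans F G p₂)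
    (α : Strict2NatTrans p₁ p₂) : M :=
  equalizer (classifyA F G σ₁ σ₂ α) (classifyB F G σ₁ σ₂ α)

/-- The projection `∫_{σ₁}^{σ₂} G α ⟶ G (α_c)`. -/
noncomputable def classProj (σ₁ : MonLaxTrans F G p₁) (σ₂ : MonLaxTrans F G p₂)
    (α : Strict2NatTrans p₁ p₂) (c : C) :
    nerveClassifier F G σ₁ σ₂ α ⟶ G.map (α.app c) :=
  equalizer.ι (classifyA F G σ₁ σ₂ α) (classifyB F G σ₁ σ₂ α) ≫ Pi.π _ c

/-- `t` is the morphism on classifying objects induced by the modification `Γ`. -/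
def IsClassInduced {σ₁ : MonLaxTrans F G p₁} {σ₂ : MonLaxTrans F G p₂}
    {α α' : Strict2NatTrans p₁ p₂} (Γ : Modification2 α α')
    (t : nerveClassifier F G σ₁ σ₂ α ⟶ nerveClassifier F G σ₁ σ₂ α') : Prop :=
  ∀ c : C, t ≫ classProj F G σ₁ σ₂ α' c = classProj F G σ₁ σ₂ α c ≫ G.map₂ (Γ.app c)

/-- `m` is the canonical "laxity" morphism
`(∫_{σ₂}^{σ₃} G β) ⊗ (∫_{σ₁}^{σ₂} G α) ⟶ ∫_{σ₁}^{σ₃} G (β ∘ α)`. -/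
def IsClassLaxity {σ₁ : MonLaxTrans F G p₁} {σ₂ : MonLaxTrans F G p₂}
    {σ₃ : MonLaxTrans F G p₃} (α : Strict2NatTrans p₁ p₂) (β : Strict2NatTrans p₂ p₃)
    (βα : Strict2NatTrans p₁ p₃) (h : ∀ c : C, βα.app c = α.app c ≫ β.app c)
    (m : nerveClassifier F G σ₂ σ₃ β ⊗ nerveClassifier F G σ₁ σ₂ α ⟶
      nerveClassifier F G σ₁ σ₃ βα) : Prop :=
  ∀ c : C, m ≫ classProj F G σ₁ σ₃ βα c =
    (classProj F G σ₂ σ₃ β c ⊗ₘ classProj F G σ₁ σ₂ α c) ≫ (β_ _ _).hom ≫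
      G.μ (α.app c) (β.app c) ≫ eqToHom (by rw [h])

/-- The canonical evaluation map `F(f) ⊗ ∫_{σ₁}^{σ₂} G α ⟶ G(α_d ∘ p₁ f)`,
obtained from the equalizer and adjoint transposition. -/
noncomputable def evMap (σ₁ : MonLaxTrans F G p₁) (σ₂ : MonLaxTrans F G p₂)
    (α : Strict2NatTrans p₁ p₂) {c d : C} (f : c ⟶ d) :
    F.map f ⊗ nerveClassifier F G σ₁ σ₂ α ⟶ G.map (p₁.map f ≫ α.app d) :=
  MonoidalClosed.uncurry
    (equalizer.ι (classifyA F G σ₁ σ₂ α) (classifyB F G σ₁ σ₂ α) ≫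
      classifyA F G σ₁ σ₂ α ≫ Pi.π _ (⟨c, d, f⟩ : OneCell C))

end Classifier


/-- a modification `Γ : α → α'` induces a canonical morphism
`∫ G Γ : ∫ G α ⟶ ∫ G α'` on the classifying objects. -/
theorem classInduced_exists
    {C : Type u} [Bicategory.{w, v} C] [Bicategory.Strict C]
    {D : Type u₂} [Bicategory.{w₂, v₂} D] [Bicategory.Strict D]
    {M : Type u₀} [Category.{v₀} M] [MonoidalCategory M]
    [SymmetricCategory M] [MonoidalClosed M]
    [HasProducts.{u} M] [HasProducts.{max u v} M] [HasEqualizers M]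
    (F : MonLaxFunctor C M) (G : MonLaxFunctor D M)
    {p₁ p₂ : StrictTwoFunctor C D}
    (σ₁ : MonLaxTrans F G p₁) (σ₂ : MonLaxTrans F G p₂)
    {α α' : Strict2NatTrans p₁ p₂} (Γ : Modification2 α α') :
    ∃! t : nerveClassifier F G σ₁ σ₂ α ⟶ nerveClassifier F G σ₁ σ₂ α',
      IsClassInduced F G (σ₁ := σ₁) (σ₂ := σ₂) Γ t := by
  classical
  set A := classifyA F G σ₁ σ₂ α with hA
  set B := classifyB F G σ₁ σ₂ α with hB
  set ι := equalizer.ι A B with hι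
  set φ : (∏ᶜ fun c : C => G.map (α.app c)) ⟶ ∏ᶜ fun c : C => G.map (α'.app c) :=
    Pi.lift fun c => Pi.π _ c ≫ G.map₂ (Γ.app c) with hφ
  -- tensor bookkeeping lemmas
  have tstepL : ∀ {X Y Y' Z W : M} (h : Y ⟶ Y') (x : X ⟶ Z) (y : Y' ⟶ W),
      X ◁ h ≫ (x ⊗ₘ y) = x ⊗ₘ (h ≫ y) := by
    intros
    rw [← MonoidalCategory.id_tensorHom, MonoidalCategory.tensorHom_comp_tensorHom, Category.id_comp]
  have tstepR : ∀ {X X' Y Z W : M} (h : X ⟶ X') (x : X' ⟶ Z) (y : Y ⟶ W),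
      h ▷ Y ≫ (x ⊗ₘ y) = (h ≫ x) ⊗ₘ y := by
    intros
    rw [← MonoidalCategory.tensorHom_id, MonoidalCategory.tensorHom_comp_tensorHom, Category.id_comp]
  have tsplitR : ∀ {X Y Z W W' : M} (x : X ⟶ Z) (a : Y ⟶ W) (b : W ⟶ W'),
      x ⊗ₘ (a ≫ b) = (x ⊗ₘ a) ≫ (𝟙 Z ⊗ₘ b) := by
    intros; rw [MonoidalCategory.tensorHom_comp_tensorHom, Category.comp_id]
  have tsplitL : ∀ {X Y Z Z' W : M} (a : X ⟶ Z) (b : Z ⟶ Z') (y : Y ⟶ W),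
      (a ≫ b) ⊗ₘ y = (a ⊗ₘ y) ≫ (b ⊗ₘ 𝟙 W) := by
    intros; rw [MonoidalCategory.tensorHom_comp_tensorHom, Category.comp_id]
  -- G.map₂ of an eqToHom is an eqToHom
  have map₂_eqToHom : ∀ {a b : D} {f g : a ⟶ b} (h : f = g),
      G.map₂ (eqToHom h) = eqToHom (congrArg G.map h) := by
    intro a b f g h; subst h; simp [G.map₂_id]
  -- the modification law, pushed through G
  have hΓ : ∀ {c d : C} (f : c ⟶ d),
      (eqToHom (show G.map (α.app c ≫ p₂.map f) = G.map (p₁.map f ≫ α.app d) by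
        rw [α.naturality]) : G.map (α.app c ≫ p₂.map f) ⟶ G.map (p₁.map f ≫ α.app d)) ≫
        G.map₂ (p₁.map f ◁ Γ.app d) =
      G.map₂ (Γ.app c ▷ p₂.map f) ≫
        eqToHom (show G.map (α'.app c ≫ p₂.map f) = G.map (p₁.map f ≫ α'.app d) by
          rw [α'.naturality]) := by
    intro c d f
    have w := congrArg G.map₂ (Γ.w f)
    rw [G.map₂_comp, G.map₂_comp, map₂_eqToHom, map₂_eqToHom, comp_eqToHom_iff] at w
    rw [w]
    simp
  have hcond : ι ≫ A = ι ≫ B := equalizer.condition A B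
  -- the equalizing condition for the lifted family
  have key : (ι ≫ φ) ≫ classifyA F G σ₁ σ₂ α' = (ι ≫ φ) ≫ classifyB F G σ₁ σ₂ α' := by
    apply limit.hom_ext
    rintro ⟨⟨c, d, f⟩⟩
    show ((ι ≫ φ) ≫ classifyA F G σ₁ σ₂ α') ≫ Pi.π _ (⟨c, d, f⟩ : OneCell C) =
      ((ι ≫ φ) ≫ classifyB F G σ₁ σ₂ α') ≫ Pi.π _ (⟨c, d, f⟩ : OneCell C)
    have hAπ : classifyA F G σ₁ σ₂ α' ≫ Pi.π _ (⟨c, d, f⟩ : OneCell C) =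
        MonoidalClosed.curry
          ((σ₁.app f ⊗ₘ Pi.π _ d) ≫ G.μ (p₁.map f) (α'.app d)) := by
      simp [classifyA]
    have hBπ : classifyB F G σ₁ σ₂ α' ≫ Pi.π _ (⟨c, d, f⟩ : OneCell C) =
        MonoidalClosed.curry
          ((β_ (F.map f) _).hom ≫ (Pi.π _ c ⊗ₘ σ₂.app f) ≫
            G.μ (α'.app c) (p₂.map f) ≫ eqToHom (by rw [α'.naturality])) := by
      simp [classifyB]
    simp only [Category.assoc]
    rw [hAπ, hBπ, ← Category.assoc, ← Category.assoc]
    apply MonoidalClosed.uncurry_injective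
    rw [MonoidalClosed.uncurry_natural_left, MonoidalClosed.uncurry_natural_left,
      MonoidalClosed.uncurry_curry, MonoidalClosed.uncurry_curry]
    -- uncurried versions of the original equalizer condition at (c,d,f)
    have hπA : A ≫ Pi.π _ (⟨c, d, f⟩ : OneCell C) =
        MonoidalClosed.curry ((σ₁.app f ⊗ₘ Pi.π _ d) ≫ G.μ (p₁.map f) (α.app d)) := by
      simp [hA, classifyA]
    have hπB : B ≫ Pi.π _ (⟨c, d, f⟩ : OneCell C) =
        MonoidalClosed.curry ((β_ (F.map f) _).hom ≫ (Pi.π _ c ⊗ₘ σ₂.app f) ≫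
          G.μ (α.app c) (p₂.map f) ≫ eqToHom (by rw [α.naturality])) := by
      simp [hB, classifyB]
    have hunc : F.map f ◁ ι ≫ (σ₁.app f ⊗ₘ Pi.π _ d) ≫ G.μ (p₁.map f) (α.app d) =
        F.map f ◁ ι ≫ (β_ (F.map f) _).hom ≫ (Pi.π _ c ⊗ₘ σ₂.app f) ≫
          G.μ (α.app c) (p₂.map f) ≫ eqToHom (by rw [α.naturality]) := by
      have e : ι ≫ A ≫ Pi.π _ (⟨c, d, f⟩ : OneCell C) =
          ι ≫ B ≫ Pi.π _ (⟨c, d, f⟩ : OneCell C) := by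
        rw [← Category.assoc, ← Category.assoc, hcond]
      rw [hπA, hπB] at e
      have e' := congrArg MonoidalClosed.uncurry e
      rwa [MonoidalClosed.uncurry_natural_left, MonoidalClosed.uncurry_natural_left,
        MonoidalClosed.uncurry_curry, MonoidalClosed.uncurry_curry] at e'
    -- compute φ components
    have hφd : φ ≫ Pi.π _ d = Pi.π _ d ≫ G.map₂ (Γ.app d) := by simp [hφ]
    have hφc : φ ≫ Pi.π _ c = Pi.π _ c ≫ G.map₂ (Γ.app c) := by simp [hφ]
    -- naturality of laxity maps
    have μnat₁ := G.μ_natural (𝟙 (p₁.map f)) (Γ.app d)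
    simp only [G.map₂_id, Bicategory.id_whiskerRight, Category.id_comp] at μnat₁
    have μnat₂ := G.μ_natural (Γ.app c) (𝟙 (p₂.map f))
    simp only [G.map₂_id, Bicategory.whiskerLeft_id, Category.comp_id] at μnat₂
    have μnat₂' : ∀ {Z : M} (h : G.map (α'.app c ≫ p₂.map f) ⟶ Z),
        (G.map₂ (Γ.app c) ⊗ₘ 𝟙 (G.map (p₂.map f))) ≫ G.μ (α'.app c) (p₂.map f) ≫ h =
          G.μ (α.app c) (p₂.map f) ≫ G.map₂ (Γ.app c ▷ p₂.map f) ≫ h := by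
      intro Z h
      rw [← Category.assoc, μnat₂, Category.assoc]
    -- left-hand side
    have lhs_eq : F.map f ◁ (ι ≫ φ) ≫ (σ₁.app f ⊗ₘ Pi.π _ d) ≫ G.μ (p₁.map f) (α'.app d) =
        (F.map f ◁ ι ≫ (σ₁.app f ⊗ₘ Pi.π _ d) ≫ G.μ (p₁.map f) (α.app d)) ≫
          G.map₂ (p₁.map f ◁ Γ.app d) := by
      rw [← Category.assoc, tstepL, Category.assoc, hφd, ← Category.assoc ι, tsplitR,
        Category.assoc, μnat₁, ← tstepL]
      simp
    -- right-hand side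
    have rhs_eq : F.map f ◁ (ι ≫ φ) ≫ (β_ (F.map f) _).hom ≫ (Pi.π _ c ⊗ₘ σ₂.app f) ≫
          G.μ (α'.app c) (p₂.map f) ≫
            eqToHom (show G.map (α'.app c ≫ p₂.map f) = G.map (p₁.map f ≫ α'.app d) by
              rw [α'.naturality]) =
        (F.map f ◁ ι ≫ (β_ (F.map f) _).hom ≫ (Pi.π _ c ⊗ₘ σ₂.app f) ≫
          G.μ (α.app c) (p₂.map f)) ≫ G.map₂ (Γ.app c ▷ p₂.map f) ≫
          eqToHom (show G.map (α'.app c ≫ p₂.map f) = G.map (p₁.map f ≫ α'.app d) by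
            rw [α'.naturality]) := by
      rw [BraidedCategory.braiding_naturality_right_assoc,
        BraidedCategory.braiding_naturality_right_assoc, ← Category.assoc ((ι ≫ φ) ▷ F.map f),
        tstepR, Category.assoc, hφc, ← Category.assoc ι, tsplitL, Category.assoc, μnat₂',
        ← tstepR]
      simp
    rw [lhs_eq, rhs_eq, hunc]
    simp only [Category.assoc]
    rw [hΓ f]
  refine ⟨equalizer.lift (ι ≫ φ) key, ?_, ?_⟩
  · intro c
    show equalizer.lift (ι ≫ φ) key ≫ classProj F G σ₁ σ₂ α' c = _
    rw [classProj]
    show equalizer.lift (ι ≫ φ) key ≫ equalizer.ι (classifyA F G σ₁ σ₂ α') (classifyB F G σ₁ σ₂ α') ≫ Pi.π _ c = _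
    rw [← Category.assoc, equalizer.lift_ι, classProj]
    simp [hφ, ← hA, ← hB, ← hι]
    exact (Category.assoc _ _ _).symm
  · intro t ht
    apply equalizer.hom_ext
    erw [equalizer.lift_ι]
    apply limit.hom_ext
    rintro ⟨c⟩
    have h := ht c
    rw [classProj, classProj] at h
    refine (Category.assoc _ _ _).trans (h.trans ?_)
    simp [hφ, ← hA, ← hB, ← hι]
    exact (Category.assoc (obj := M) _ _ _).trans ((congrArg (fun k => ι ≫ k)
      (Pi.lift_π (fun c => Pi.π (fun c => G.map (α.app c)) c ≫ G.map₂ (Γ.app c)) c).symm).trans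
        (Category.assoc (obj := M) _ _ _).symm)
end

section
/- There is a canonical evaluation morphism F ⊠ HOM(F,G) → G of M-valued lax functors: its underlying 2-functor is C × B(F,G) → C × 2Func(C,D) → D (forget then evaluate), and its component at a 1-morphism (f : c → d, (α, ∫Gα)) is the evaluation map F(f) ⊗ ∫_{σ₁}^{σ₂} Gα → G(α_d ∘ p₁f) obtained from the equalizer projection and adjoint transposition; these components satisfy the icon coherence condition with respect to composition of 1-morphisms in C × B(F,G). -/
open CategoryTheory CategoryTheory.Limits CategoryTheory.MonoidalCategory
universe w v u w₂ v₂ u₂ w₃ v₃ u₃ v₀ u₀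

open CategoryTheory.Bicategory

section Helpers
variable {C : Type u} [Bicategory.{w, v} C] [Bicategory.Strict C]
variable {D : Type u₂} [Bicategory.{w₂, v₂} D] [Bicategory.Strict D]
variable {M : Type u₀} [Category.{v₀} M] [MonoidalCategory M] [SymmetricCategory M]
  [MonoidalClosed M] [HasProducts.{u} M] [HasProducts.{max u v} M] [HasEqualizers M]
variable (F : MonLaxFunctor C M) (G : MonLaxFunctor D M) {p₁ p₂ p₃ : StrictTwoFunctor C D}

lemma mu_eqToHom {x y z : D} {u u' : x ⟶ y} {v v' : y ⟶ z} (hu : u = u') (hv : v = v')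
    (h₁ : G.map u = G.map u') (h₂ : G.map v = G.map v') (h₃ : G.map (u ≫ v) = G.map (u' ≫ v')) :
    (eqToHom h₁ ⊗ₘ eqToHom h₂) ≫ G.μ u' v' = G.μ u v ≫ eqToHom h₃ := by
  subst hu; subst hv; simp

lemma evMap_eq (σ₁ : MonLaxTrans F G p₁) (σ₂ : MonLaxTrans F G p₂)
    (α : Strict2NatTrans p₁ p₂) {c d : C} (f : c ⟶ d) :
    evMap F G σ₁ σ₂ α f =
      (σ₁.app f ⊗ₘ classProj F G σ₁ σ₂ α d) ≫ G.μ (p₁.map f) (α.app d) := by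
  rw [evMap]
  rw [show classifyA F G σ₁ σ₂ α ≫ Pi.π _ (⟨c, d, f⟩ : OneCell C) = MonoidalClosed.curry
      ((σ₁.app f ⊗ₘ Pi.π _ d) ≫ G.μ (p₁.map f) (α.app d)) from limit.lift_π _ _]
  erw [MonoidalClosed.uncurry_natural_left]
  rw [MonoidalClosed.uncurry_curry, classProj]
  unfold nerveClassifier
  rw [← MonoidalCategory.id_tensorHom, ← Category.assoc, MonoidalCategory.tensorHom_comp_tensorHom]
  simp

lemma mu_eqToHom_right {x y z : D} {u : x ⟶ y} {v v' : y ⟶ z} (hv : v = v')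
    (h₂ : G.map v = G.map v') (h₃ : G.map (u ≫ v) = G.map (u ≫ v')) :
    (𝟙 (G.map u) ⊗ₘ eqToHom h₂) ≫ G.μ u v' = G.μ u v ≫ eqToHom h₃ := by
  subst hv; simp

lemma mu_eqToHom_left {x y z : D} {u u' : x ⟶ y} {v : y ⟶ z} (hu : u = u')
    (h₁ : G.map u = G.map u') (h₃ : G.map (u ≫ v) = G.map (u' ≫ v)) :
    (eqToHom h₁ ⊗ₘ 𝟙 (G.map v)) ≫ G.μ u' v = G.μ u v ≫ eqToHom h₃ := by
  subst hu; simp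

lemma swap_eq (σ₁ : MonLaxTrans F G p₁) (σ₂ : MonLaxTrans F G p₂)
    (α : Strict2NatTrans p₁ p₂) {d e : C} (h : d ⟶ e) :
    (σ₁.app h ⊗ₘ classProj F G σ₁ σ₂ α e) ≫ G.μ (p₁.map h) (α.app e) =
      (β_ (F.map h) (nerveClassifier F G σ₁ σ₂ α)).hom ≫
        (classProj F G σ₁ σ₂ α d ⊗ₘ σ₂.app h) ≫ G.μ (α.app d) (p₂.map h) ≫
          eqToHom (by rw [α.naturality]) := by
  have h1 : equalizer.ι (classifyA F G σ₁ σ₂ α) (classifyB F G σ₁ σ₂ α) ≫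
      classifyA F G σ₁ σ₂ α ≫ Pi.π _ (⟨d, e, h⟩ : OneCell C) =
      equalizer.ι (classifyA F G σ₁ σ₂ α) (classifyB F G σ₁ σ₂ α) ≫
      classifyB F G σ₁ σ₂ α ≫ Pi.π _ (⟨d, e, h⟩ : OneCell C) := by
    rw [← Category.assoc, equalizer.condition, Category.assoc]
  rw [show classifyA F G σ₁ σ₂ α ≫ Pi.π _ (⟨d, e, h⟩ : OneCell C) = MonoidalClosed.curry
      ((σ₁.app h ⊗ₘ Pi.π _ e) ≫ G.μ (p₁.map h) (α.app e)) from limit.lift_π _ _,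
    show classifyB F G σ₁ σ₂ α ≫ Pi.π _ (⟨d, e, h⟩ : OneCell C) = MonoidalClosed.curry
      ((β_ (F.map h) _).hom ≫ (Pi.π _ d ⊗ₘ σ₂.app h) ≫ G.μ (α.app d) (p₂.map h) ≫
        eqToHom (by rw [α.naturality])) from limit.lift_π _ _] at h1
  have h2 := congrArg MonoidalClosed.uncurry h1
  rw [MonoidalClosed.uncurry_natural_left, MonoidalClosed.uncurry_natural_left,
    MonoidalClosed.uncurry_curry, MonoidalClosed.uncurry_curry] at h2
  rw [show F.map h ◁ equalizer.ι (classifyA F G σ₁ σ₂ α) (classifyB F G σ₁ σ₂ α) ≫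
      (σ₁.app h ⊗ₘ Pi.π _ e) ≫ G.μ (p₁.map h) (α.app e) =
      (σ₁.app h ⊗ₘ classProj F G σ₁ σ₂ α e) ≫ G.μ (p₁.map h) (α.app e) by
    rw [classProj, ← MonoidalCategory.id_tensorHom, ← Category.assoc,
      MonoidalCategory.tensorHom_comp_tensorHom]; simp; rfl] at h2
  rw [h2, ← Category.assoc, BraidedCategory.braiding_naturality_right, Category.assoc, classProj]
  congr 1
  rw [← MonoidalCategory.tensorHom_id, ← Category.assoc, MonoidalCategory.tensorHom_comp_tensorHom]
  simp
  rfl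

lemma assoc₁ {x y z w : D} (f : x ⟶ y) (g : y ⟶ z) (k : z ⟶ w) :
    (G.μ f g ⊗ₘ 𝟙 (G.map k)) ≫ G.μ (f ≫ g) k =
      (MonoidalCategory.associator _ _ _).hom ≫ (𝟙 (G.map f) ⊗ₘ G.μ g k) ≫ G.μ f (g ≫ k) ≫
        eqToHom (by rw [Category.assoc]) := by
  rw [← cancel_mono (eqToHom (show G.map ((f ≫ g) ≫ k) = G.map (f ≫ g ≫ k) from by
    rw [Category.assoc]))]
  simpa using G.assoc f g k

lemma assoc₂ {x y z w : D} (f : x ⟶ y) (g : y ⟶ z) (k : z ⟶ w) :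
    (𝟙 (G.map f) ⊗ₘ G.μ g k) ≫ G.μ f (g ≫ k) =
      (MonoidalCategory.associator _ _ _).inv ≫ (G.μ f g ⊗ₘ 𝟙 (G.map k)) ≫ G.μ (f ≫ g) k ≫
        eqToHom (by rw [Category.assoc]) := by
  rw [reassoc_of% (assoc₁ G f g k)]; simp

lemma quad {w₁ w₂ w₃ w₄ w₅ : D} (k₁ : w₁ ⟶ w₂) (k₂ : w₂ ⟶ w₃) (k₃ : w₃ ⟶ w₄) (k₄ : w₄ ⟶ w₅) :
    (G.μ k₁ k₂ ⊗ₘ G.μ k₃ k₄) ≫ G.μ (k₁ ≫ k₂) (k₃ ≫ k₄) =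
      (MonoidalCategory.associator (G.map k₁) (G.map k₂) (G.map k₃ ⊗ G.map k₄)).hom ≫
        (𝟙 (G.map k₁) ⊗ₘ (MonoidalCategory.associator (G.map k₂) (G.map k₃) (G.map k₄)).inv) ≫
        (𝟙 (G.map k₁) ⊗ₘ ((G.μ k₂ k₃ ⊗ₘ 𝟙 (G.map k₄)) ≫ G.μ (k₂ ≫ k₃) k₄)) ≫
        G.μ k₁ ((k₂ ≫ k₃) ≫ k₄) ≫ eqToHom (by simp) := by
  rw [show (G.μ k₁ k₂ ⊗ₘ G.μ k₃ k₄) = (𝟙 (G.map k₁ ⊗ G.map k₂) ⊗ₘ G.μ k₃ k₄) ≫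
      (G.μ k₁ k₂ ⊗ₘ 𝟙 (G.map (k₃ ≫ k₄))) from by
    rw [MonoidalCategory.tensorHom_comp_tensorHom]; simp]
  slice_lhs 2 3 => rw [assoc₁ G k₁ k₂ (k₃ ≫ k₄)]
  slice_lhs 1 2 => rw [← MonoidalCategory.id_tensorHom_id, MonoidalCategory.associator_naturality]
  slice_lhs 2 3 => rw [MonoidalCategory.tensorHom_comp_tensorHom, Category.comp_id, assoc₂ G k₂ k₃ k₄]
  simp only [MonoidalCategory.id_tensor_comp, Category.assoc]
  rw [reassoc_of% (mu_eqToHom_right G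
    (show (k₂ ≫ k₃) ≫ k₄ = k₂ ≫ k₃ ≫ k₄ from by rw [Category.assoc])
    (by rw [Category.assoc])
    (show G.map (k₁ ≫ (k₂ ≫ k₃) ≫ k₄) = G.map (k₁ ≫ k₂ ≫ k₃ ≫ k₄) from by
      rw [Category.assoc]))]
  simp

lemma mu_eqToHom_mid {x y z w : D} (s : x ⟶ y) {q q' : y ⟶ z} (r : z ⟶ w) (hq : q = q')
    (h₁ : G.map q = G.map q') {T : M} (hT : G.map (s ≫ q' ≫ r) = T)
    (hT' : G.map (s ≫ q ≫ r) = T) :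
    (𝟙 (G.map s) ⊗ₘ (eqToHom h₁ ⊗ₘ 𝟙 (G.map r))) ≫ (𝟙 (G.map s) ⊗ₘ G.μ q' r) ≫
        G.μ s (q' ≫ r) ≫ eqToHom hT =
      (𝟙 (G.map s) ⊗ₘ G.μ q r) ≫ G.μ s (q ≫ r) ≫ eqToHom hT' := by
  subst hq; subst hT; simp
end Helpers
section Abstract
variable {M : Type u₀} [Category.{v₀} M] [MonoidalCategory M] [SymmetricCategory M]

lemma structural (A X B Y : M) :
    tensorμ A X B Y ≫ (MonoidalCategory.associator A B (X ⊗ Y)).hom ≫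
        (𝟙 A ⊗ₘ (MonoidalCategory.associator B X Y).inv) ≫
        (𝟙 A ⊗ₘ ((β_ B X).hom ⊗ₘ 𝟙 Y)) =
      (MonoidalCategory.associator A X (B ⊗ Y)).hom ≫
        (𝟙 A ⊗ₘ (MonoidalCategory.associator X B Y).inv) := by
  simp only [tensorμ, Category.assoc, Iso.inv_hom_id_assoc,
    MonoidalCategory.id_tensorHom, MonoidalCategory.tensorHom_id,
    ← MonoidalCategory.whiskerLeft_comp, Iso.hom_inv_id_assoc]
  rw [← MonoidalCategory.comp_whiskerRight, SymmetricCategory.symmetry]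
  simp


set_option maxHeartbeats 1600000 in
lemma key {A X B Y GA GB GB' GX GX' GY N R K L P Q T : M}
    (a : A ⟶ GA) (b : B ⟶ GB) (b' : B ⟶ GB') (x : X ⟶ GX') (xe : X ⟶ GX) (y : Y ⟶ GY)
    (μuv : GA ⊗ GB ⟶ K) (μxy : GX ⊗ GY ⟶ L) (μKL : K ⊗ L ⟶ T)
    (μvx : GB ⊗ GX ⟶ N) (μxb : GX' ⊗ GB' ⟶ N)
    (μuA : GA ⊗ GX' ⟶ P) (μvB : GB' ⊗ GY ⟶ Q) (μPQ : P ⊗ Q ⟶ T)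
    (μNy : N ⊗ GY ⟶ R) (μuR : GA ⊗ R ⟶ T)
    (hswap : (b ⊗ₘ xe) ≫ μvx = (β_ B X).hom ≫ (x ⊗ₘ b') ≫ μxb)
    (hquadL : (μuv ⊗ₘ μxy) ≫ μKL =
      (MonoidalCategory.associator GA GB (GX ⊗ GY)).hom ≫
        (𝟙 GA ⊗ₘ (MonoidalCategory.associator GB GX GY).inv) ≫
        (𝟙 GA ⊗ₘ (μvx ⊗ₘ 𝟙 GY)) ≫ (𝟙 GA ⊗ₘ μNy) ≫ μuR)
    (hquadR : (μuA ⊗ₘ μvB) ≫ μPQ =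
      (MonoidalCategory.associator GA GX' (GB' ⊗ GY)).hom ≫
        (𝟙 GA ⊗ₘ (MonoidalCategory.associator GX' GB' GY).inv) ≫
        (𝟙 GA ⊗ₘ (μxb ⊗ₘ 𝟙 GY)) ≫ (𝟙 GA ⊗ₘ μNy) ≫ μuR) :
    tensorμ A X B Y ≫ ((a ⊗ₘ b) ⊗ₘ (xe ⊗ₘ y)) ≫ (μuv ⊗ₘ μxy) ≫ μKL =
      ((a ⊗ₘ x) ⊗ₘ (b' ⊗ₘ y)) ≫ (μuA ⊗ₘ μvB) ≫ μPQ := by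
  rw [hquadL, hquadR]
  have eq1 : (a ⊗ₘ (b ⊗ₘ (xe ⊗ₘ y))) ≫ (𝟙 GA ⊗ₘ (MonoidalCategory.associator GB GX GY).inv) =
      (𝟙 A ⊗ₘ (MonoidalCategory.associator B X Y).inv) ≫ (a ⊗ₘ ((b ⊗ₘ xe) ⊗ₘ y)) := by
    rw [MonoidalCategory.tensorHom_comp_tensorHom, MonoidalCategory.tensorHom_comp_tensorHom, Category.comp_id,
      Category.id_comp, MonoidalCategory.associator_inv_naturality]
  have eq2 : (a ⊗ₘ ((b ⊗ₘ xe) ⊗ₘ y)) ≫ (𝟙 GA ⊗ₘ (μvx ⊗ₘ 𝟙 GY)) =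
      (𝟙 A ⊗ₘ ((β_ B X).hom ⊗ₘ 𝟙 Y)) ≫ (a ⊗ₘ (((x ⊗ₘ b') ≫ μxb) ⊗ₘ y)) := by
    rw [MonoidalCategory.tensorHom_comp_tensorHom, MonoidalCategory.tensorHom_comp_tensorHom, Category.comp_id,
      Category.comp_id, hswap, MonoidalCategory.tensorHom_comp_tensorHom, MonoidalCategory.tensorHom_comp_tensorHom,
      Category.id_comp, Category.id_comp]
  have eq1R : (a ⊗ₘ (x ⊗ₘ (b' ⊗ₘ y))) ≫ (𝟙 GA ⊗ₘ (MonoidalCategory.associator GX' GB' GY).inv) =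
      (𝟙 A ⊗ₘ (MonoidalCategory.associator X B Y).inv) ≫ (a ⊗ₘ ((x ⊗ₘ b') ⊗ₘ y)) := by
    rw [MonoidalCategory.tensorHom_comp_tensorHom, MonoidalCategory.tensorHom_comp_tensorHom, Category.comp_id,
      Category.id_comp, MonoidalCategory.associator_inv_naturality]
  have eq2R : (a ⊗ₘ ((x ⊗ₘ b') ⊗ₘ y)) ≫ (𝟙 GA ⊗ₘ (μxb ⊗ₘ 𝟙 GY)) =
      a ⊗ₘ (((x ⊗ₘ b') ≫ μxb) ⊗ₘ y) := by
    rw [MonoidalCategory.tensorHom_comp_tensorHom, MonoidalCategory.tensorHom_comp_tensorHom, Category.comp_id,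
      Category.comp_id]
  have stepL : tensorμ A X B Y ≫ ((a ⊗ₘ b) ⊗ₘ (xe ⊗ₘ y)) ≫
      (MonoidalCategory.associator GA GB (GX ⊗ GY)).hom ≫
      (𝟙 GA ⊗ₘ (MonoidalCategory.associator GB GX GY).inv) ≫
      (𝟙 GA ⊗ₘ (μvx ⊗ₘ 𝟙 GY)) =
      (MonoidalCategory.associator A X (B ⊗ Y)).hom ≫
        (𝟙 A ⊗ₘ (MonoidalCategory.associator X B Y).inv) ≫
        (a ⊗ₘ (((x ⊗ₘ b') ≫ μxb) ⊗ₘ y)) := by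
    slice_lhs 2 3 => rw [MonoidalCategory.associator_naturality]
    slice_lhs 3 4 => rw [eq1]
    slice_lhs 4 5 => rw [eq2]
    slice_lhs 1 4 => rw [structural]
    simp only [Category.assoc]
  have stepR : ((a ⊗ₘ x) ⊗ₘ (b' ⊗ₘ y)) ≫
      (MonoidalCategory.associator GA GX' (GB' ⊗ GY)).hom ≫
      (𝟙 GA ⊗ₘ (MonoidalCategory.associator GX' GB' GY).inv) ≫
      (𝟙 GA ⊗ₘ (μxb ⊗ₘ 𝟙 GY)) =
      (MonoidalCategory.associator A X (B ⊗ Y)).hom ≫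
        (𝟙 A ⊗ₘ (MonoidalCategory.associator X B Y).inv) ≫
        (a ⊗ₘ (((x ⊗ₘ b') ≫ μxb) ⊗ₘ y)) := by
    slice_lhs 1 2 => rw [MonoidalCategory.associator_naturality]
    slice_lhs 2 3 => rw [eq1R]
    slice_lhs 3 4 => rw [eq2R]
  calc tensorμ A X B Y ≫ ((a ⊗ₘ b) ⊗ₘ (xe ⊗ₘ y)) ≫
      (MonoidalCategory.associator GA GB (GX ⊗ GY)).hom ≫
      (𝟙 GA ⊗ₘ (MonoidalCategory.associator GB GX GY).inv) ≫
      (𝟙 GA ⊗ₘ (μvx ⊗ₘ 𝟙 GY)) ≫ (𝟙 GA ⊗ₘ μNy) ≫ μuR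
      = (tensorμ A X B Y ≫ ((a ⊗ₘ b) ⊗ₘ (xe ⊗ₘ y)) ≫
        (MonoidalCategory.associator GA GB (GX ⊗ GY)).hom ≫
        (𝟙 GA ⊗ₘ (MonoidalCategory.associator GB GX GY).inv) ≫
        (𝟙 GA ⊗ₘ (μvx ⊗ₘ 𝟙 GY))) ≫ (𝟙 GA ⊗ₘ μNy) ≫ μuR := by
        simp only [Category.assoc]
    _ = (((a ⊗ₘ x) ⊗ₘ (b' ⊗ₘ y)) ≫
        (MonoidalCategory.associator GA GX' (GB' ⊗ GY)).hom ≫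
        (𝟙 GA ⊗ₘ (MonoidalCategory.associator GX' GB' GY).inv) ≫
        (𝟙 GA ⊗ₘ (μxb ⊗ₘ 𝟙 GY))) ≫ (𝟙 GA ⊗ₘ μNy) ≫ μuR := by rw [stepL, ← stepR]
    _ = ((a ⊗ₘ x) ⊗ₘ (b' ⊗ₘ y)) ≫
        (MonoidalCategory.associator GA GX' (GB' ⊗ GY)).hom ≫
        (𝟙 GA ⊗ₘ (MonoidalCategory.associator GX' GB' GY).inv) ≫
        (𝟙 GA ⊗ₘ (μxb ⊗ₘ 𝟙 GY)) ≫ (𝟙 GA ⊗ₘ μNy) ≫ μuR := by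
        simp only [Category.assoc]

end Abstract

/-- the canonical evaluation `F ⊠ HOM(F,G) → G` satisfies the icon
coherence condition with respect to composition of 1-morphisms. -/
theorem evaluation_icon_coherence
    {C : Type u} [Bicategory.{w, v} C] [Bicategory.Strict C]
    {D : Type u₂} [Bicategory.{w₂, v₂} D] [Bicategory.Strict D]
    {M : Type u₀} [Category.{v₀} M] [MonoidalCategory M]
    [SymmetricCategory M] [MonoidalClosed M]
    [HasProducts.{u} M] [HasProducts.{max u v} M] [HasEqualizers M]
    (F : MonLaxFunctor C M) (G : MonLaxFunctor D M)
    {p₁ p₂ p₃ : StrictTwoFunctor C D}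
    (σ₁ : MonLaxTrans F G p₁) (σ₂ : MonLaxTrans F G p₂) (σ₃ : MonLaxTrans F G p₃)
    (α : Strict2NatTrans p₁ p₂) (β : Strict2NatTrans p₂ p₃)
    (βα : Strict2NatTrans p₁ p₃) (hc : ∀ c : C, βα.app c = α.app c ≫ β.app c)
    (m : nerveClassifier F G σ₂ σ₃ β ⊗ nerveClassifier F G σ₁ σ₂ α ⟶
      nerveClassifier F G σ₁ σ₃ βα)
    (hm : IsClassLaxity F G (σ₁ := σ₁) (σ₂ := σ₂) (σ₃ := σ₃) α β βα hc m)
    {c d e : C} (f : c ⟶ d) (h : d ⟶ e) :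
    tensorμ (F.map f) (nerveClassifier F G σ₁ σ₂ α)
        (F.map h) (nerveClassifier F G σ₂ σ₃ β) ≫
      (F.μ f h ⊗ₘ ((β_ (nerveClassifier F G σ₁ σ₂ α) (nerveClassifier F G σ₂ σ₃ β)).hom ≫ m)) ≫
      evMap F G σ₁ σ₃ βα (f ≫ h) =
    (evMap F G σ₁ σ₂ α f ⊗ₘ evMap F G σ₂ σ₃ β h) ≫
      G.μ (p₁.map f ≫ α.app d) (p₂.map h ≫ β.app e) ≫
      eqToHom (by
        congr 1
        rw [p₁.map_comp, hc e]
        simp only [Category.assoc]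
        rw [← Category.assoc (α.app d) (p₂.map h) (β.app e), ← α.naturality h,
          Category.assoc]) := by
  have e1 : G.map (p₁.map f ≫ p₁.map h) = G.map (p₁.map (f ≫ h)) := by rw [p₁.map_comp]
  have e2 : G.map (α.app e ≫ β.app e) = G.map (βα.app e) := by rw [hc]
  have eN : G.map (α.app d ≫ p₂.map h) = G.map (p₁.map h ≫ α.app e) := by rw [α.naturality]
  have eT : G.map (p₁.map f ≫ (p₁.map h ≫ α.app e) ≫ β.app e) =
      G.map (p₁.map (f ≫ h) ≫ βα.app e) := by
    rw [p₁.map_comp, hc e]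
    congr 1
    simp only [Category.assoc]
  have eT' : G.map (p₁.map f ≫ (α.app d ≫ p₂.map h) ≫ β.app e) =
      G.map (p₁.map (f ≫ h) ≫ βα.app e) := by rw [α.naturality h] at eT; exact eT
  have hm2 : (β_ (nerveClassifier F G σ₁ σ₂ α) (nerveClassifier F G σ₂ σ₃ β)).hom ≫
      m ≫ classProj F G σ₁ σ₃ βα e =
      (classProj F G σ₁ σ₂ α e ⊗ₘ classProj F G σ₂ σ₃ β e) ≫
        G.μ (α.app e) (β.app e) ≫ eqToHom e2 := by
    rw [hm e]
    slice_lhs 1 2 => rw [← BraidedCategory.braiding_naturality]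
    slice_lhs 2 3 => rw [SymmetricCategory.symmetry]
    simp
  -- bring goal into `key` shape
  rw [evMap_eq, evMap_eq, evMap_eq]
  have hLmaps : (F.μ f h ⊗ₘ ((β_ (nerveClassifier F G σ₁ σ₂ α)
        (nerveClassifier F G σ₂ σ₃ β)).hom ≫ m)) ≫
        (σ₁.app (f ≫ h) ⊗ₘ classProj F G σ₁ σ₃ βα e) =
      ((σ₁.app f ⊗ₘ σ₁.app h) ⊗ₘ (classProj F G σ₁ σ₂ α e ⊗ₘ classProj F G σ₂ σ₃ β e)) ≫
        ((G.μ (p₁.map f) (p₁.map h) ≫ eqToHom e1) ⊗ₘ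
          (G.μ (α.app e) (β.app e) ≫ eqToHom e2)) := by
    rw [MonoidalCategory.tensorHom_comp_tensorHom, Category.assoc, hm2, σ₁.comp f h,
      ← MonoidalCategory.tensorHom_comp_tensorHom]
  have hqL : (G.μ (p₁.map f) (p₁.map h) ⊗ₘ G.μ (α.app e) (β.app e)) ≫
      ((eqToHom e1 ⊗ₘ eqToHom e2) ≫ G.μ (p₁.map (f ≫ h)) (βα.app e)) =
      (MonoidalCategory.associator _ _ _).hom ≫
        (𝟙 (G.map (p₁.map f)) ⊗ₘ (MonoidalCategory.associator _ _ _).inv) ≫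
        (𝟙 (G.map (p₁.map f)) ⊗ₘ (G.μ (p₁.map h) (α.app e) ⊗ₘ 𝟙 (G.map (β.app e)))) ≫
        (𝟙 (G.map (p₁.map f)) ⊗ₘ G.μ (p₁.map h ≫ α.app e) (β.app e)) ≫
        (G.μ (p₁.map f) ((p₁.map h ≫ α.app e) ≫ β.app e) ≫ eqToHom eT) := by
    rw [mu_eqToHom G (p₁.map_comp f h).symm (hc e).symm e1 e2
      (show G.map ((p₁.map f ≫ p₁.map h) ≫ α.app e ≫ β.app e) =
        G.map (p₁.map (f ≫ h) ≫ βα.app e) from by rw [p₁.map_comp, hc e])]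
    rw [reassoc_of% (quad G (p₁.map f) (p₁.map h) (α.app e) (β.app e))]
    simp only [MonoidalCategory.id_tensor_comp, Category.assoc, eqToHom_trans]
  have hqR : (G.μ (p₁.map f) (α.app d) ⊗ₘ G.μ (p₂.map h) (β.app e)) ≫
      (G.μ (p₁.map f ≫ α.app d) (p₂.map h ≫ β.app e) ≫ eqToHom (show
        G.map ((p₁.map f ≫ α.app d) ≫ p₂.map h ≫ β.app e) =
        G.map (p₁.map (f ≫ h) ≫ βα.app e) from by
          rw [p₁.map_comp, hc e]
          congr 1
          simp only [Category.assoc]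
          rw [← Category.assoc (α.app d) (p₂.map h) (β.app e), ← α.naturality h,
            Category.assoc])) =
      (MonoidalCategory.associator _ _ _).hom ≫
        (𝟙 (G.map (p₁.map f)) ⊗ₘ (MonoidalCategory.associator _ _ _).inv) ≫
        (𝟙 (G.map (p₁.map f)) ⊗ₘ ((G.μ (α.app d) (p₂.map h) ≫ eqToHom eN) ⊗ₘ 𝟙 (G.map (β.app e)))) ≫
        (𝟙 (G.map (p₁.map f)) ⊗ₘ G.μ (p₁.map h ≫ α.app e) (β.app e)) ≫
        (G.μ (p₁.map f) ((p₁.map h ≫ α.app e) ≫ β.app e) ≫ eqToHom eT) := by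
    rw [reassoc_of% (quad G (p₁.map f) (α.app d) (p₂.map h) (β.app e))]
    conv_rhs => rw [MonoidalCategory.comp_tensor_id, MonoidalCategory.id_tensor_comp]
    conv_rhs => rw [Category.assoc, mu_eqToHom_mid G (p₁.map f) (β.app e)
      (α.naturality h).symm eN eT eT']
    simp only [MonoidalCategory.id_tensor_comp, Category.assoc, eqToHom_trans]
  calc tensorμ (F.map f) (nerveClassifier F G σ₁ σ₂ α)
        (F.map h) (nerveClassifier F G σ₂ σ₃ β) ≫
      (F.μ f h ⊗ₘ ((β_ (nerveClassifier F G σ₁ σ₂ α) (nerveClassifier F G σ₂ σ₃ β)).hom ≫ m)) ≫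
      (σ₁.app (f ≫ h) ⊗ₘ classProj F G σ₁ σ₃ βα e) ≫ G.μ (p₁.map (f ≫ h)) (βα.app e)
      = tensorμ (F.map f) (nerveClassifier F G σ₁ σ₂ α)
          (F.map h) (nerveClassifier F G σ₂ σ₃ β) ≫
        ((σ₁.app f ⊗ₘ σ₁.app h) ⊗ₘ (classProj F G σ₁ σ₂ α e ⊗ₘ classProj F G σ₂ σ₃ β e)) ≫
        (G.μ (p₁.map f) (p₁.map h) ⊗ₘ G.μ (α.app e) (β.app e)) ≫
        ((eqToHom e1 ⊗ₘ eqToHom e2) ≫ G.μ (p₁.map (f ≫ h)) (βα.app e)) := by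
        rw [reassoc_of% hLmaps, ← MonoidalCategory.tensorHom_comp_tensorHom]
        simp only [Category.assoc]
    _ = ((σ₁.app f ⊗ₘ classProj F G σ₁ σ₂ α d) ⊗ₘ (σ₂.app h ⊗ₘ classProj F G σ₂ σ₃ β e)) ≫
        (G.μ (p₁.map f) (α.app d) ⊗ₘ G.μ (p₂.map h) (β.app e)) ≫
        (G.μ (p₁.map f ≫ α.app d) (p₂.map h ≫ β.app e) ≫ eqToHom (show
          G.map ((p₁.map f ≫ α.app d) ≫ p₂.map h ≫ β.app e) =
          G.map (p₁.map (f ≫ h) ≫ βα.app e) from by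
            rw [p₁.map_comp, hc e]
            congr 1
            simp only [Category.assoc]
            rw [← Category.assoc (α.app d) (p₂.map h) (β.app e), ← α.naturality h,
              Category.assoc])) :=
      key (σ₁.app f) (σ₁.app h) (σ₂.app h) (classProj F G σ₁ σ₂ α d)
        (classProj F G σ₁ σ₂ α e) (classProj F G σ₂ σ₃ β e)
        (G.μ (p₁.map f) (p₁.map h)) (G.μ (α.app e) (β.app e))
        ((eqToHom e1 ⊗ₘ eqToHom e2) ≫ G.μ (p₁.map (f ≫ h)) (βα.app e))
        (G.μ (p₁.map h) (α.app e)) (G.μ (α.app d) (p₂.map h) ≫ eqToHom eN)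
        (G.μ (p₁.map f) (α.app d)) (G.μ (p₂.map h) (β.app e))
        (G.μ (p₁.map f ≫ α.app d) (p₂.map h ≫ β.app e) ≫ eqToHom _)
        (G.μ (p₁.map h ≫ α.app e) (β.app e))
        (G.μ (p₁.map f) ((p₁.map h ≫ α.app e) ≫ β.app e) ≫ eqToHom eT)
        (swap_eq F G σ₁ σ₂ α h) hqL hqR
    _ = ((σ₁.app f ⊗ₘ classProj F G σ₁ σ₂ α d) ≫ G.μ (p₁.map f) (α.app d) ⊗ₘ
          (σ₂.app h ⊗ₘ classProj F G σ₂ σ₃ β e) ≫ G.μ (p₂.map h) (β.app e)) ≫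
        G.μ (p₁.map f ≫ α.app d) (p₂.map h ≫ β.app e) ≫ eqToHom (by
          congr 1
          rw [p₁.map_comp, hc e]
          simp only [Category.assoc]
          rw [← Category.assoc (α.app d) (p₂.map h) (β.app e), ← α.naturality h,
            Category.assoc]) := by
        rw [← MonoidalCategory.tensorHom_comp_tensorHom]
        simp only [Category.assoc]
end
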